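/- Let X = ℝⁿ and let μ₁ = a₁δ_{x₁}, μ₂ = a₂δ_{x₂} with a₁, a₂ > 0 and |x₁ − x₂| = π/2. Then the Hellinger curve μᴴ(s) := (1−s)²a₁δ_{x₁} + s²a₂δ_{x₂}, s ∈ [0,1], satisfies HK(μᴴ(s), μᴴ(t)) = |s − t|·HK(μ₁, μ₂) for all s, t ∈ [0,1]; i.e., it is a constant-speed geodesic in (𝓜(ℝⁿ), HK). -/

import Mathlib

open Real MeasureTheory ENNReal

/-- Squared cone distance `d_𝔠²([x₁,r₁],[x₂,r₂]) = r₁² + r₂² − 2r₁r₂ cos(min(d(x₁,x₂),π))`,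
on representatives in `X × ℝ`. -/
noncomputable def coneCost {X : Type*} [MetricSpace X] (p q : X × ℝ) : ℝ :=
  p.2 ^ 2 + q.2 ^ 2 - 2 * p.2 * q.2 * Real.cos (min (dist p.1 q.1) π)

/-- First homogeneous marginal `𝔥₁²α = (x₁)_#(r₁² α)` of a plan on the (squared) cone. -/
noncomputable def hmarg1 {X : Type*} [MeasurableSpace X]
    (α : Measure ((X × ℝ) × (X × ℝ))) : Measure X :=
  Measure.map (fun p => p.1.1) (α.withDensity fun p => ENNReal.ofReal (p.1.2 ^ 2))

/-- Second homogeneous marginal `𝔥₂²α = (x₂)_#(r₂² α)`. -/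
noncomputable def hmarg2 {X : Type*} [MeasurableSpace X]
    (α : Measure ((X × ℝ) × (X × ℝ))) : Measure X :=
  Measure.map (fun p => p.2.1) (α.withDensity fun p => ENNReal.ofReal (p.2.2 ^ 2))

/-- The squared Hellinger–Kantorovich distance:
`HK²(μ₁,μ₂) = inf { ∫ d_𝔠²(η₁,η₂) dα : 𝔥ᵢ²α = μᵢ }`. -/
noncomputable def HK2 {X : Type*} [MetricSpace X] [MeasurableSpace X]
    (μ ν : Measure X) : ℝ≥0∞ :=
  ⨅ (α : Measure ((X × ℝ) × (X × ℝ))) (_ : hmarg1 α = μ) (_ : hmarg2 α = ν),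
    ∫⁻ p, ENNReal.ofReal (coneCost p.1 p.2) ∂α

/-- The Hellinger curve `μᴴ(s) = (1−s)²a₁δ_{x₁} + s²a₂δ_{x₂}`. -/
noncomputable def hellingerCurve {n : ℕ} (x₁ x₂ : EuclideanSpace ℝ (Fin n))
    (a₁ a₂ s : ℝ) : Measure (EuclideanSpace ℝ (Fin n)) :=
  ENNReal.ofReal ((1 - s) ^ 2 * a₁) • Measure.dirac x₁ +
    ENNReal.ofReal (s ^ 2 * a₂) • Measure.dirac x₂


/-!
Mass carried across distance `π / 2` costs exactly as much as destroying it and creating it anew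
(the cosine in the cone cost vanishes), so between measures supported on `{x₁, x₂}` the only
useful transport keeps mass in place, and `HK²(c₁δ_{x₁} + c₂δ_{x₂}, d₁δ_{x₁} + d₂δ_{x₂})`
is the Hellinger distance `∑ᵢ (√cᵢ - √dᵢ)²`: the plan keeping mass in place attains it, and
Cauchy–Schwarz on the mass kept at each point shows no plan does better. Along the Hellinger
curve the square roots of the masses are affine in `s`, whence `HK² = (s - t)² (a₁ + a₂)`.
-/

section ConeCost

variable {X : Type*} [MetricSpace X]

theorem coneCost_of_fst_eq (x : X) (r s : ℝ) : coneCost (x, r) (x, s) = (r - s) ^ 2 := by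
  simp only [coneCost, dist_self, min_eq_left pi_pos.le, cos_zero]
  ring

theorem coneCost_eq_sq_add_sq {p q : X × ℝ} (h : p.2 = 0 ∨ q.2 = 0 ∨ dist p.1 q.1 = π / 2) :
    coneCost p q = p.2 ^ 2 + q.2 ^ 2 := by
  rcases h with h | h | h
  · simp [coneCost, h]
  · simp [coneCost, h]
  · rw [coneCost, h, min_eq_left (by linarith [pi_pos]), cos_pi_div_two]
    ring

theorem coneCost_eq_sq_add_sq_of_pair {x₁ x₂ : X} (hd : dist x₁ x₂ = π / 2) {p q : X × ℝ}
    (hp : p.1 = x₁ ∨ p.1 = x₂ ∨ p.2 = 0) (hq : q.1 = x₁ ∨ q.1 = x₂ ∨ q.2 = 0)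
    (h₁ : ¬(p.1 = x₁ ∧ q.1 = x₁)) (h₂ : ¬(p.1 = x₂ ∧ q.1 = x₂)) :
    coneCost p q = p.2 ^ 2 + q.2 ^ 2 := by
  apply coneCost_eq_sq_add_sq
  rcases hp with hp | hp | hp <;> rcases hq with hq | hq | hq <;> simp_all [dist_comm]

theorem sq_add_sq_le_coneCost_add (p q : X × ℝ) :
    p.2 ^ 2 + q.2 ^ 2 ≤ coneCost p q + 2 * (|p.2| * |q.2|) := by
  have : p.2 * q.2 * cos (min (dist p.1 q.1) π) ≤ |p.2| * |q.2| :=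
    calc _ ≤ |p.2 * q.2 * cos (min (dist p.1 q.1) π)| := le_abs_self _
      _ ≤ |p.2| * |q.2| * 1 := by
        rw [abs_mul, abs_mul]
        gcongr
        exact abs_cos_le_one _
      _ = |p.2| * |q.2| := mul_one _
  unfold coneCost
  linarith

end ConeCost

section Marginals

variable {X : Type*} [MeasurableSpace X] (α : Measure ((X × ℝ) × (X × ℝ)))

theorem hmarg1_apply {s : Set X} (hs : MeasurableSet s) :
    hmarg1 α s = ∫⁻ p in (fun p => p.1.1) ⁻¹' s, ENNReal.ofReal (p.1.2 ^ 2) ∂α := by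
  rw [hmarg1, Measure.map_apply (by fun_prop) hs, withDensity_apply _ (measurable_fst.fst hs)]

theorem hmarg2_apply {s : Set X} (hs : MeasurableSet s) :
    hmarg2 α s = ∫⁻ p in (fun p => p.2.1) ⁻¹' s, ENNReal.ofReal (p.2.2 ^ 2) ∂α := by
  rw [hmarg2, Measure.map_apply (by fun_prop) hs, withDensity_apply _ (measurable_snd.fst hs)]

theorem hmarg1_univ :
    hmarg1 α Set.univ = ∫⁻ p, ENNReal.ofReal (p.1.2 ^ 2) ∂α := by
  rw [hmarg1_apply α MeasurableSet.univ, Set.preimage_univ, setLIntegral_univ]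

theorem hmarg2_univ :
    hmarg2 α Set.univ = ∫⁻ p, ENNReal.ofReal (p.2.2 ^ 2) ∂α := by
  rw [hmarg2_apply α MeasurableSet.univ, Set.preimage_univ, setLIntegral_univ]

theorem hmarg1_add (β : Measure ((X × ℝ) × (X × ℝ))) :
    hmarg1 (α + β) = hmarg1 α + hmarg1 β := by
  rw [hmarg1, withDensity_add_measure, Measure.map_add _ _ (by fun_prop)]
  rfl

theorem hmarg2_add (β : Measure ((X × ℝ) × (X × ℝ))) :
    hmarg2 (α + β) = hmarg2 α + hmarg2 β := by
  rw [hmarg2, withDensity_add_measure, Measure.map_add _ _ (by fun_prop)]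
  rfl

theorem hmarg1_dirac (x y : X) (r s : ℝ) :
    hmarg1 (Measure.dirac ((x, r), (y, s))) = ENNReal.ofReal (r ^ 2) • Measure.dirac x := by
  rw [hmarg1, dirac_withDensity' (by fun_prop), Measure.map_smul,
    Measure.map_dirac' (by fun_prop)]

theorem hmarg2_dirac (x y : X) (r s : ℝ) :
    hmarg2 (Measure.dirac ((x, r), (y, s))) = ENNReal.ofReal (s ^ 2) • Measure.dirac y := by
  rw [hmarg2, dirac_withDensity' (by fun_prop), Measure.map_smul,
    Measure.map_dirac' (by fun_prop)]

variable {α}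

theorem ae_fst_radius_eq_zero_of_hmarg1_eq_zero {s : Set X} (hs : MeasurableSet s)
    (h : hmarg1 α s = 0) : ∀ᵐ p ∂α, p.1.1 ∈ s → p.1.2 = 0 := by
  rw [hmarg1_apply α hs, lintegral_eq_zero_iff (by fun_prop), Filter.EventuallyEq,
    ae_restrict_iff' (measurable_fst.fst hs)] at h
  filter_upwards [h] with p hp hps
  simpa using hp hps

theorem ae_snd_radius_eq_zero_of_hmarg2_eq_zero {s : Set X} (hs : MeasurableSet s)
    (h : hmarg2 α s = 0) : ∀ᵐ p ∂α, p.2.1 ∈ s → p.2.2 = 0 := by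
  rw [hmarg2_apply α hs, lintegral_eq_zero_iff (by fun_prop), Filter.EventuallyEq,
    ae_restrict_iff' (measurable_snd.fst hs)] at h
  filter_upwards [h] with p hp hps
  simpa using hp hps

theorem HK2_le_lintegral_coneCost [MetricSpace X] {μ ν : Measure X} (h₁ : hmarg1 α = μ)
    (h₂ : hmarg2 α = ν) : HK2 μ ν ≤ ∫⁻ p, ENNReal.ofReal (coneCost p.1 p.2) ∂α :=
  iInf₂_le_of_le α h₁ (iInf_le _ h₂)

end Marginals

theorem lintegral_ofReal_abs_mul_abs_le {P : Type*} [MeasurableSpace P] {μ : Measure P}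
    {F G : P → ℝ} (hF : AEMeasurable F μ) (hG : AEMeasurable G μ) {c d : ℝ} (hc : 0 ≤ c)
    (hd : 0 ≤ d) (hFc : ∫⁻ p, ENNReal.ofReal (F p ^ 2) ∂μ ≤ ENNReal.ofReal c)
    (hGd : ∫⁻ p, ENNReal.ofReal (G p ^ 2) ∂μ ≤ ENNReal.ofReal d) :
    ∫⁻ p, ENNReal.ofReal (|F p| * |G p|) ∂μ ≤ ENNReal.ofReal (√c * √d) := by
  have abs_rpow_two (x : ℝ) : ENNReal.ofReal |x| ^ (2 : ℝ) = ENNReal.ofReal (x ^ 2) := by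
    rw [ENNReal.ofReal_rpow_of_nonneg (abs_nonneg x) zero_le_two, Real.rpow_two, sq_abs]
  have root {H : P → ℝ} {e : ℝ} (he : 0 ≤ e) (hHe : ∫⁻ p, ENNReal.ofReal (H p ^ 2) ∂μ ≤
      ENNReal.ofReal e) : (∫⁻ p, ENNReal.ofReal |H p| ^ (2 : ℝ) ∂μ) ^ (1 / 2 : ℝ) ≤
        ENNReal.ofReal √e := by
    rw [sqrt_eq_rpow, ← ENNReal.ofReal_rpow_of_nonneg he (by norm_num)]
    simp only [abs_rpow_two]
    gcongr
  calc ∫⁻ p, ENNReal.ofReal (|F p| * |G p|) ∂μ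
      = ∫⁻ p, ((fun p => ENNReal.ofReal |F p|) * fun p => ENNReal.ofReal |G p|) p ∂μ := by
        simp only [Pi.mul_apply, ENNReal.ofReal_mul (abs_nonneg _)]
    _ ≤ _ := ENNReal.lintegral_mul_le_Lp_mul_Lq μ HolderConjugate.two_two (by fun_prop)
        (by fun_prop)
    _ ≤ ENNReal.ofReal √c * ENNReal.ofReal √d := mul_le_mul' (root hc hFc) (root hd hGd)
    _ = ENNReal.ofReal (√c * √d) := (ENNReal.ofReal_mul (sqrt_nonneg c)).symm

theorem ofReal_add_ofReal_eq {c d : ℝ} (hc : 0 ≤ c) (hd : 0 ≤ d) :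
    ENNReal.ofReal c + ENNReal.ofReal d =
      ENNReal.ofReal ((√c - √d) ^ 2) + 2 * ENNReal.ofReal (√c * √d) := by
  rw [← ENNReal.ofReal_ofNat 2, ← ENNReal.ofReal_mul zero_le_two, ← ENNReal.ofReal_add hc hd,
    ← ENNReal.ofReal_add (sq_nonneg _) (by positivity)]
  congr 1
  linear_combination -(sq_sqrt hc) - sq_sqrt hd

section TwoPoint

variable {X : Type*} [MeasurableSpace X] [MeasurableSingletonClass X]

theorem setLIntegral_abs_mul_abs_le_of_hmarg {α : Measure ((X × ℝ) × (X × ℝ))} (x : X)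
    {c d : ℝ} (hc : 0 ≤ c) (hd : 0 ≤ d) (h₁ : hmarg1 α {x} = ENNReal.ofReal c)
    (h₂ : hmarg2 α {x} = ENNReal.ofReal d) :
    ∫⁻ p in {p | p.1.1 = x ∧ p.2.1 = x}, ENNReal.ofReal (|p.1.2| * |p.2.2|) ∂α ≤
      ENNReal.ofReal (√c * √d) := by
  rw [hmarg1_apply α (measurableSet_singleton x)] at h₁
  rw [hmarg2_apply α (measurableSet_singleton x)] at h₂
  refine lintegral_ofReal_abs_mul_abs_le (by fun_prop) (by fun_prop) hc hd ?_ ?_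
  · exact (lintegral_mono_set fun p hp => hp.1).trans h₁.le
  · exact (lintegral_mono_set fun p hp => hp.2).trans h₂.le

theorem HK2_twoPoint_le [MetricSpace X] (x₁ x₂ : X) {c₁ c₂ d₁ d₂ : ℝ} (hc₁ : 0 ≤ c₁) (hc₂ : 0 ≤ c₂)
    (hd₁ : 0 ≤ d₁) (hd₂ : 0 ≤ d₂) :
    HK2 (ENNReal.ofReal c₁ • Measure.dirac x₁ + ENNReal.ofReal c₂ • Measure.dirac x₂)
        (ENNReal.ofReal d₁ • Measure.dirac x₁ + ENNReal.ofReal d₂ • Measure.dirac x₂) ≤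
      ENNReal.ofReal ((√c₁ - √d₁) ^ 2 + (√c₂ - √d₂) ^ 2) := by
  set α := Measure.dirac ((x₁, √c₁), (x₁, √d₁)) + Measure.dirac ((x₂, √c₂), (x₂, √d₂))
  have h₁ : hmarg1 α = ENNReal.ofReal c₁ • Measure.dirac x₁ +
      ENNReal.ofReal c₂ • Measure.dirac x₂ := by
    simp only [α, hmarg1_add, hmarg1_dirac, sq_sqrt hc₁, sq_sqrt hc₂]
  have h₂ : hmarg2 α = ENNReal.ofReal d₁ • Measure.dirac x₁ +
      ENNReal.ofReal d₂ • Measure.dirac x₂ := by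
    simp only [α, hmarg2_add, hmarg2_dirac, sq_sqrt hd₁, sq_sqrt hd₂]
  calc _ ≤ ∫⁻ p, ENNReal.ofReal (coneCost p.1 p.2) ∂α := HK2_le_lintegral_coneCost h₁ h₂
    _ = _ := by
      simp only [α, lintegral_add_measure, lintegral_dirac, coneCost_of_fst_eq,
        ENNReal.ofReal_add (sq_nonneg _) (sq_nonneg _)]

theorem lintegral_sq_add_lintegral_sq_le [MetricSpace X] {x₁ x₂ : X} (hd : dist x₁ x₂ = π / 2)
    {α : Measure ((X × ℝ) × (X × ℝ))} (hA : ∀ᵐ p ∂α, p.1.1 = x₁ ∨ p.1.1 = x₂ ∨ p.1.2 = 0)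
    (hB : ∀ᵐ p ∂α, p.2.1 = x₁ ∨ p.2.1 = x₂ ∨ p.2.2 = 0) :
    ∫⁻ p, ENNReal.ofReal (p.1.2 ^ 2) ∂α + ∫⁻ p, ENNReal.ofReal (p.2.2 ^ 2) ∂α ≤
      ∫⁻ p, ENNReal.ofReal (coneCost p.1 p.2) ∂α +
        2 * ∫⁻ p in {p | p.1.1 = x₁ ∧ p.2.1 = x₁}, ENNReal.ofReal (|p.1.2| * |p.2.2|) ∂α +
        2 * ∫⁻ p in {p | p.1.1 = x₂ ∧ p.2.1 = x₂}, ENNReal.ofReal (|p.1.2| * |p.2.2|) ∂α := by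
  set D : X → Set ((X × ℝ) × (X × ℝ)) := fun x => {p | p.1.1 = x ∧ p.2.1 = x}
  have hD (x : X) : MeasurableSet (D x) :=
    (measurable_fst.fst (measurableSet_singleton x)).inter
      (measurable_snd.fst (measurableSet_singleton x))
  set f : (X × ℝ) × (X × ℝ) → ℝ≥0∞ := fun p => 2 * ENNReal.ofReal (|p.1.2| * |p.2.2|)
  have hpt : ∀ᵐ p ∂α, ENNReal.ofReal (p.1.2 ^ 2) + ENNReal.ofReal (p.2.2 ^ 2) ≤
      ENNReal.ofReal (coneCost p.1 p.2) + (D x₁).indicator f p + (D x₂).indicator f p := by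
    filter_upwards [hA, hB] with p hpA hpB
    rw [add_assoc]
    by_cases hp : p ∈ D x₁ ∪ D x₂
    · calc ENNReal.ofReal (p.1.2 ^ 2) + ENNReal.ofReal (p.2.2 ^ 2)
          = ENNReal.ofReal (p.1.2 ^ 2 + p.2.2 ^ 2) :=
            (ENNReal.ofReal_add (sq_nonneg _) (sq_nonneg _)).symm
        _ ≤ ENNReal.ofReal (coneCost p.1 p.2 + 2 * (|p.1.2| * |p.2.2|)) :=
            ENNReal.ofReal_le_ofReal (sq_add_sq_le_coneCost_add _ _)
        _ ≤ ENNReal.ofReal (coneCost p.1 p.2) + f p := by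
            refine ENNReal.ofReal_add_le.trans_eq ?_
            rw [ENNReal.ofReal_mul zero_le_two, ENNReal.ofReal_ofNat]
        _ ≤ _ := by
            gcongr
            rcases hp with hp | hp
            · exact (Set.indicator_of_mem hp f).ge.trans le_self_add
            · exact (Set.indicator_of_mem hp f).ge.trans le_add_self
    · rw [coneCost_eq_sq_add_sq_of_pair hd hpA hpB (fun h => hp (Or.inl h))
        (fun h => hp (Or.inr h)), ENNReal.ofReal_add (sq_nonneg _) (sq_nonneg _)]
      exact le_self_add
  calc _ = ∫⁻ p, (ENNReal.ofReal (p.1.2 ^ 2) + ENNReal.ofReal (p.2.2 ^ 2)) ∂α :=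
        (lintegral_add_left (by fun_prop) _).symm
    _ ≤ ∫⁻ p, (ENNReal.ofReal (coneCost p.1 p.2) + (D x₁).indicator f p +
          (D x₂).indicator f p) ∂α := lintegral_mono_ae hpt
    _ = _ := by
        rw [lintegral_add_right _ (by fun_prop (disch := exact hD _)),
          lintegral_add_right _ (by fun_prop (disch := exact hD _)),
          lintegral_indicator (hD x₁), lintegral_indicator (hD x₂),
          lintegral_const_mul' _ _ ENNReal.ofNat_ne_top,
          lintegral_const_mul' _ _ ENNReal.ofNat_ne_top]

theorem ofReal_le_lintegral_coneCost_of_twoPoint [MetricSpace X] {x₁ x₂ : X}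
    (hd : dist x₁ x₂ = π / 2) {c₁ c₂ d₁ d₂ : ℝ} (hc₁ : 0 ≤ c₁) (hc₂ : 0 ≤ c₂) (hd₁ : 0 ≤ d₁)
    (hd₂ : 0 ≤ d₂) {α : Measure ((X × ℝ) × (X × ℝ))}
    (h₁ : hmarg1 α = ENNReal.ofReal c₁ • Measure.dirac x₁ + ENNReal.ofReal c₂ • Measure.dirac x₂)
    (h₂ : hmarg2 α = ENNReal.ofReal d₁ • Measure.dirac x₁ + ENNReal.ofReal d₂ • Measure.dirac x₂) :
    ENNReal.ofReal ((√c₁ - √d₁) ^ 2 + (√c₂ - √d₂) ^ 2) ≤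
      ∫⁻ p, ENNReal.ofReal (coneCost p.1 p.2) ∂α := by
  have hne : x₁ ≠ x₂ := dist_pos.1 (by rw [hd]; positivity)
  have hout : MeasurableSet ({x₁, x₂} : Set X)ᶜ := (Set.toFinite _).measurableSet.compl
  have hA : ∀ᵐ p ∂α, p.1.1 = x₁ ∨ p.1.1 = x₂ ∨ p.1.2 = 0 := by
    filter_upwards [ae_fst_radius_eq_zero_of_hmarg1_eq_zero (α := α) hout (by simp [h₁])] with p hp
    simp only [Set.mem_compl_iff, Set.mem_insert_iff, Set.mem_singleton_iff] at hp
    tauto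
  have hB : ∀ᵐ p ∂α, p.2.1 = x₁ ∨ p.2.1 = x₂ ∨ p.2.2 = 0 := by
    filter_upwards [ae_snd_radius_eq_zero_of_hmarg2_eq_zero (α := α) hout (by simp [h₂])] with p hp
    simp only [Set.mem_compl_iff, Set.mem_insert_iff, Set.mem_singleton_iff] at hp
    tauto
  have key := lintegral_sq_add_lintegral_sq_le hd hA hB
  simp only [← hmarg1_univ, ← hmarg2_univ, h₁, h₂, Measure.add_apply, Measure.smul_apply,
    measure_univ, smul_eq_mul, mul_one] at key
  have cross₁ := setLIntegral_abs_mul_abs_le_of_hmarg (α := α) x₁ hc₁ hd₁ (by simp [h₁, hne.symm])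
    (by simp [h₂, hne.symm])
  have cross₂ := setLIntegral_abs_mul_abs_le_of_hmarg (α := α) x₂ hc₂ hd₂ (by simp [h₁, hne])
    (by simp [h₂, hne])
  refine ENNReal.le_of_add_le_add_right (a := 2 * ENNReal.ofReal (√c₁ * √d₁) +
    2 * ENNReal.ofReal (√c₂ * √d₂)) (by finiteness) ?_
  calc _ = ENNReal.ofReal c₁ + ENNReal.ofReal d₁ + (ENNReal.ofReal c₂ + ENNReal.ofReal d₂) := by
        rw [ENNReal.ofReal_add (sq_nonneg _) (sq_nonneg _), add_add_add_comm,
          ofReal_add_ofReal_eq hc₁ hd₁, ofReal_add_ofReal_eq hc₂ hd₂]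
    _ = ENNReal.ofReal c₁ + ENNReal.ofReal c₂ + (ENNReal.ofReal d₁ + ENNReal.ofReal d₂) :=
        add_add_add_comm _ _ _ _
    _ ≤ _ := key
    _ ≤ _ := by
        rw [add_assoc]
        gcongr

theorem HK2_twoPoint [MetricSpace X] {x₁ x₂ : X} (hd : dist x₁ x₂ = π / 2) {c₁ c₂ d₁ d₂ : ℝ}
    (hc₁ : 0 ≤ c₁) (hc₂ : 0 ≤ c₂) (hd₁ : 0 ≤ d₁) (hd₂ : 0 ≤ d₂) :
    HK2 (ENNReal.ofReal c₁ • Measure.dirac x₁ + ENNReal.ofReal c₂ • Measure.dirac x₂)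
        (ENNReal.ofReal d₁ • Measure.dirac x₁ + ENNReal.ofReal d₂ • Measure.dirac x₂) =
      ENNReal.ofReal ((√c₁ - √d₁) ^ 2 + (√c₂ - √d₂) ^ 2) :=
  (HK2_twoPoint_le x₁ x₂ hc₁ hc₂ hd₁ hd₂).antisymm <| le_iInf₂ fun _ h₁ => le_iInf fun h₂ =>
    ofReal_le_lintegral_coneCost_of_twoPoint hd hc₁ hc₂ hd₁ hd₂ h₁ h₂

theorem HK2_smul_dirac_smul_dirac [MetricSpace X] {x₁ x₂ : X} (hd : dist x₁ x₂ = π / 2)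
    {a₁ a₂ : ℝ} (h₁ : 0 ≤ a₁) (h₂ : 0 ≤ a₂) :
    HK2 (ENNReal.ofReal a₁ • Measure.dirac x₁) (ENNReal.ofReal a₂ • Measure.dirac x₂) =
      ENNReal.ofReal (a₁ + a₂) := by
  have := HK2_twoPoint hd h₁ le_rfl le_rfl h₂
  simp only [ENNReal.ofReal_zero, zero_smul, add_zero, zero_add, sqrt_zero, sub_zero, zero_sub,
    neg_sq, sq_sqrt h₁, sq_sqrt h₂] at this
  exact this

end TwoPoint

theorem HK2_hellingerCurve {n : ℕ} {x₁ x₂ : EuclideanSpace ℝ (Fin n)} (hd : dist x₁ x₂ = π / 2)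
    {a₁ a₂ : ℝ} (h₁ : 0 ≤ a₁) (h₂ : 0 ≤ a₂) {s t : ℝ} (hs : s ∈ Set.Icc (0 : ℝ) 1)
    (ht : t ∈ Set.Icc (0 : ℝ) 1) :
    HK2 (hellingerCurve x₁ x₂ a₁ a₂ s) (hellingerCurve x₁ x₂ a₁ a₂ t) =
      ENNReal.ofReal ((s - t) ^ 2 * (a₁ + a₂)) := by
  rw [hellingerCurve, hellingerCurve, HK2_twoPoint hd (by positivity) (by positivity)
    (by positivity) (by positivity)]
  simp only [sqrt_mul (sq_nonneg _), sqrt_sq (sub_nonneg.2 hs.2), sqrt_sq (sub_nonneg.2 ht.2),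
    sqrt_sq hs.1, sqrt_sq ht.1]
  congr 1
  linear_combination (s - t) ^ 2 * (sq_sqrt h₁ + sq_sqrt h₂)

/-- For Dirac masses at distance `π/2`, the Hellinger curve is a constant speed geodesic
for the Hellinger–Kantorovich distance `HK = √(HK²)`. -/
theorem hellingerCurve_constant_speed_geodesic (n : ℕ)
    (x₁ x₂ : EuclideanSpace ℝ (Fin n)) (a₁ a₂ : ℝ) (h₁ : 0 < a₁) (h₂ : 0 < a₂)
    (hd : dist x₁ x₂ = π / 2) :
    ∀ s ∈ Set.Icc (0 : ℝ) 1, ∀ t ∈ Set.Icc (0 : ℝ) 1,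
      Real.sqrt (HK2 (hellingerCurve x₁ x₂ a₁ a₂ s) (hellingerCurve x₁ x₂ a₁ a₂ t)).toReal =
        |s - t| * Real.sqrt (HK2 (ENNReal.ofReal a₁ • Measure.dirac x₁)
          (ENNReal.ofReal a₂ • Measure.dirac x₂)).toReal := by
  intro s hs t ht
  rw [HK2_hellingerCurve hd h₁.le h₂.le hs ht, HK2_smul_dirac_smul_dirac hd h₁.le h₂.le,
    ENNReal.toReal_ofReal (by positivity), ENNReal.toReal_ofReal (by positivity),
    sqrt_mul (sq_nonneg _), sqrt_sq_eq_abs]
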